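/- Let $p_1,\ldots,p_n$ be analytic at $0$ with $p_i(0)=1$, set $P_1=p_1$ and $P_\ell = p_\ell/p_{\ell-1}$. For indices $1\le i < j \le n$, the nested multiple contour integral $\oint\frac{dv_1}{2\pi i}\cdots\oint\frac{dv_j}{2\pi i}\; \frac{v_1^{i-1} p_i(v_1)}{\left[\prod_{\ell=1}^{j-1}(v_\ell - v_{\ell+1})\right]\cdot\left[\prod_{\ell=1}^{j} v_\ell P_\ell(v_\ell)\right]}$ over nested small circles $|v_1| > \cdots > |v_j|$ around the origin equals $0$. -/

import Mathlib

/-!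
Take the residues at `v₀ = v₁` one at a time: exchanging the two outermost circle integrals
and applying Cauchy's formula in `v₀` replaces `v₀` by `v₁`, and since
`P_{a+1} = p_{a+1} / p_a` the factor `1 / p_a` this leaves behind cancels, so the integrand
keeps its shape with one variable less and the power of the outermost variable lowered by one.
After `i` steps the outermost variable appears only through `v₀⁻¹ (v₀ - v₁)⁻¹`, which decays like
`v₀⁻²`: its residues at `0` and `v₁` cancel and the integral vanishes.
-/

open Finset

/-- `(2πi)⁻¹ ∮_{|v|=r} f(v) dv`. -/
noncomputable def cInt (r : ℝ) (f : ℂ → ℂ) : ℂ :=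
  (2 * Real.pi * Complex.I)⁻¹ * ∮ v in C(0, r), f v

/-- Iterated (nested) contour integrals: `j` counterclockwise circles around `0` of radii
`r 0 > r 1 > ⋯ > r (j-1)`, the variable `v k` running over the circle of radius `r k`,
each integral carrying the factor `(2πi)⁻¹`. -/
noncomputable def nestedCI : ℕ → (ℕ → ℝ) → ((ℕ → ℂ) → ℂ) → ℂ
  | 0, _, F => F fun _ => 0
  | j+1, r, F => cInt (r 0) fun v =>
      nestedCI j (fun k => r (k+1)) fun w => F fun k => match k with
        | 0 => v
        | k+1 => w k

open Metric Set Function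

lemma cInt_congr {r : ℝ} (hr : 0 ≤ r) {f g : ℂ → ℂ} (h : EqOn f g (sphere 0 r)) :
    cInt r f = cInt r g := by
  rw [cInt, cInt, circleIntegral.integral_congr hr h]

lemma cInt_const_mul (r : ℝ) (c : ℂ) (f : ℂ → ℂ) :
    cInt r (fun v => c * f v) = c * cInt r f := by
  rw [cInt, cInt, circleIntegral.integral_const_mul, mul_left_comm]

lemma cInt_mul_const (r : ℝ) (c : ℂ) (f : ℂ → ℂ) :
    cInt r (fun v => f v * c) = cInt r f * c := by
  simpa only [mul_comm _ c] using cInt_const_mul r c f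

lemma cInt_sub_inv_mul {r : ℝ} {f : ℂ → ℂ} (hf : DiffContOnCl ℂ f (ball 0 r)) {w : ℂ}
    (hw : w ∈ ball 0 r) : cInt r (fun v => (v - w)⁻¹ * f v) = f w := by
  simpa only [cInt, smul_eq_mul] using hf.two_pi_i_inv_smul_circleIntegral_sub_inv_smul hw

lemma cInt_sub_inv {r : ℝ} {w : ℂ} (hw : w ∈ ball 0 r) : cInt r (fun v => (v - w)⁻¹) = 1 := by
  simpa only [mul_one] using cInt_sub_inv_mul (diffContOnCl_const (c := (1 : ℂ))) hw

lemma cInt_inv_mul_sub_inv {r : ℝ} {w : ℂ} (hw : w ∈ ball 0 r) (hw0 : w ≠ 0) :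
    cInt r (fun v => v⁻¹ * (v - w)⁻¹) = 0 := by
  have hr : 0 < r := pos_of_mem_ball hw
  have h0 : (0 : ℂ) ∈ ball 0 r := mem_ball_self hr
  have hw_norm : ‖w‖ < r := mem_ball_zero_iff.1 hw
  have integrable {z : ℂ} (hz : z ∈ ball 0 r) : CircleIntegrable (fun v => (v - z)⁻¹) 0 r :=
    circleIntegrable_sub_inv_iff.2 <| Or.inr fun hz' => by
      rw [abs_of_pos hr] at hz'
      exact (mem_ball.1 hz).ne (mem_sphere.1 hz')
  -- partial fractions: `1 / (v (v - w)) = ((v - w)⁻¹ - v⁻¹) / w`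
  have hpf : EqOn (fun v => v⁻¹ * (v - w)⁻¹) (fun v => w⁻¹ * ((v - w)⁻¹ - (v - 0)⁻¹))
      (sphere 0 r) := fun v hv => by
    have hv0 : v ≠ 0 := ne_zero_of_mem_sphere hr.ne' ⟨v, hv⟩
    have hvw : v - w ≠ 0 := sub_ne_zero.2 fun h => by
      rw [mem_sphere_zero_iff_norm, h] at hv; linarith
    field_simp
    ring
  rw [cInt_congr hr.le hpf, cInt_const_mul, cInt, circleIntegral.integral_sub (integrable hw)
    (integrable h0), mul_sub, ← cInt, ← cInt, cInt_sub_inv hw, cInt_sub_inv h0, sub_self,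
    mul_zero]

lemma cInt_comm {r s : ℝ} (hr : 0 ≤ r) (hs : 0 ≤ s) {Φ : ℂ → ℂ → ℂ}
    (hΦ : ContinuousOn (uncurry Φ) (sphere 0 r ×ˢ sphere 0 s)) :
    cInt r (fun v => cInt s (Φ v)) = cInt s (fun w => cInt r (fun v => Φ v w)) := by
  have hΦc : Continuous fun q : ℝ × ℝ => Φ (circleMap 0 r q.1) (circleMap 0 s q.2) :=
    hΦ.comp_continuous (f := fun q : ℝ × ℝ => (circleMap 0 r q.1, circleMap 0 s q.2))
      (by fun_prop) fun q =>
      ⟨circleMap_mem_sphere 0 hr q.1, circleMap_mem_sphere 0 hs q.2⟩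
  simp only [cInt, circleIntegral, deriv_circleMap, smul_eq_mul,
    ← intervalIntegral.integral_const_mul]
  rw [MeasureTheory.intervalIntegral_intervalIntegral_swap]
  · refine intervalIntegral.integral_congr fun φ _ => intervalIntegral.integral_congr fun θ _ => ?_
    ring
  · refine ContinuousOn.integrableOn_compact (isCompact_uIcc.prod isCompact_uIcc) ?_ |>.mono_set
      (prod_mono uIoc_subset_uIcc uIoc_subset_uIcc)
    have hγ (t : ℝ) : Continuous fun q : ℝ × ℝ => circleMap 0 t q.1 * Complex.I := by fun_prop
    exact (continuous_const.mul <| (hγ r).mul <| continuous_const.mul <|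
      ((hγ s).comp continuous_swap).mul hΦc).continuousOn

def consSeq (v : ℂ) (w : ℕ → ℂ) : ℕ → ℂ
  | 0 => v
  | k + 1 => w k

@[simp] lemma consSeq_zero (v : ℂ) (w : ℕ → ℂ) : consSeq v w 0 = v := rfl

@[simp] lemma consSeq_succ (v : ℂ) (w : ℕ → ℂ) (k : ℕ) : consSeq v w (k + 1) = w k := rfl

lemma continuous_consSeq : Continuous fun q : ℂ × (ℕ → ℂ) => consSeq q.1 q.2 :=
  continuous_pi fun k => by
    cases k with
    | zero => exact continuous_fst
    | succ k => exact (continuous_apply k).comp continuous_snd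

lemma nestedCI_succ (m : ℕ) (r : ℕ → ℝ) (F : (ℕ → ℂ) → ℂ) :
    nestedCI (m + 1) r F = cInt (r 0) fun v => nestedCI m (fun k => r (k + 1)) (F ∘ consSeq v) :=
  rfl

def nestedTorus (m : ℕ) (r : ℕ → ℝ) : Set (ℕ → ℂ) :=
  {v | ∀ k < m, v k ∈ sphere 0 (r k)}

lemma consSeq_mem_nestedTorus {m : ℕ} {r : ℕ → ℝ} {v : ℂ} {w : ℕ → ℂ} (hv : v ∈ sphere 0 (r 0))
    (hw : w ∈ nestedTorus m fun k => r (k + 1)) : consSeq v w ∈ nestedTorus (m + 1) r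
  | 0, _ => hv
  | k + 1, hk => hw k (by omega)

lemma nestedCI_congr {m : ℕ} {r : ℕ → ℝ} (hr : ∀ k, 0 ≤ r k) {F G : (ℕ → ℂ) → ℂ}
    (h : EqOn F G (nestedTorus m r)) : nestedCI m r F = nestedCI m r G := by
  induction m generalizing r F G with
  | zero => exact h fun k hk => absurd hk k.not_lt_zero
  | succ m ih =>
    refine cInt_congr (hr 0) fun v hv => ih (fun k => hr (k + 1)) fun w hw => ?_
    exact h (consSeq_mem_nestedTorus hv hw)

lemma nestedCI_const_mul (m : ℕ) (r : ℕ → ℝ) (c : ℂ) (F : (ℕ → ℂ) → ℂ) :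
    nestedCI m r (fun v => c * F v) = c * nestedCI m r F := by
  induction m generalizing r F with
  | zero => rfl
  | succ m ih =>
    rw [nestedCI_succ, nestedCI_succ, ← cInt_const_mul]
    exact congrArg _ (funext fun v => ih _ _)

lemma nestedCI_zero (m : ℕ) (r : ℕ → ℝ) : nestedCI m r (fun _ => 0) = 0 := by
  simpa using nestedCI_const_mul m r 0 (fun _ => 0)

lemma continuous_nestedCI {X : Type*} [TopologicalSpace X] {m : ℕ} {r : ℕ → ℝ}
    (hr : ∀ k, 0 ≤ r k) {H : X → (ℕ → ℂ) → ℂ}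
    (hH : ContinuousOn (uncurry H) (univ ×ˢ nestedTorus m r)) :
    Continuous fun x => nestedCI m r (H x) := by
  induction m generalizing X r H with
  | zero =>
    exact hH.comp_continuous (continuous_id.prodMk continuous_const) fun x =>
      ⟨mem_univ x, fun k hk => absurd hk k.not_lt_zero⟩
  | succ m ih =>
    have hinner : Continuous fun q : X × ℝ =>
        nestedCI m (fun k => r (k + 1)) (H q.1 ∘ consSeq (circleMap 0 (r 0) q.2)) := by
      refine ih (fun k => hr (k + 1)) (hH.comp (Continuous.continuousOn ?_) ?_ :
        ContinuousOn (uncurry H ∘ fun q : (X × ℝ) × (ℕ → ℂ) =>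
          (q.1.1, consSeq (circleMap 0 (r 0) q.1.2) q.2)) _)
      · exact continuous_fst.fst.prodMk <| continuous_consSeq.comp <|
          ((continuous_circleMap 0 (r 0)).comp continuous_fst.snd).prodMk continuous_snd
      · rintro ⟨⟨x, θ⟩, w⟩ ⟨-, hw⟩
        exact ⟨mem_univ x, consSeq_mem_nestedTorus (circleMap_mem_sphere 0 (hr 0) θ) hw⟩
    simp only [nestedCI_succ, cInt, circleIntegral, deriv_circleMap, smul_eq_mul]
    exact continuous_const.mul <|
      intervalIntegral.continuous_parametric_intervalIntegral_of_continuous'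
        ((((continuous_circleMap 0 (r 0)).comp continuous_snd).mul continuous_const).mul hinner) _ _

lemma continuousOn_nestedCI_consSeq {m : ℕ} {r : ℕ → ℝ} (hr : ∀ k, 0 ≤ r k)
    {G : (ℕ → ℂ) → ℂ} (hG : ContinuousOn G (nestedTorus (m + 1) r)) :
    ContinuousOn (fun v => nestedCI m (fun k => r (k + 1)) (G ∘ consSeq v)) (sphere 0 (r 0)) := by
  rw [continuousOn_iff_continuous_domRestrict]
  refine continuous_nestedCI (H := fun v : sphere (0 : ℂ) (r 0) => G ∘ consSeq v)
    (fun k => hr (k + 1)) (hG.comp (Continuous.continuousOn ?_) ?_ :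
      ContinuousOn (G ∘ fun q : sphere (0 : ℂ) (r 0) × (ℕ → ℂ) => consSeq q.1 q.2) _)
  · exact continuous_consSeq.comp ((continuous_subtype_val.comp continuous_fst).prodMk
      continuous_snd)
  · rintro ⟨v, w⟩ ⟨-, hw⟩
    exact consSeq_mem_nestedTorus v.2 hw

lemma nestedCI_integrate_first {m : ℕ} {r : ℕ → ℝ} (hr : ∀ k, 0 ≤ r k) {g : ℂ → ℂ → ℂ}
    {h : ℂ → ℂ} {G : (ℕ → ℂ) → ℂ}
    (hg : ContinuousOn (uncurry g) (sphere 0 (r 0) ×ˢ sphere 0 (r 1)))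
    (hgh : ∀ w ∈ sphere 0 (r 1), cInt (r 0) (fun v => g v w) = h w)
    (hG : ContinuousOn G (nestedTorus (m + 1) fun k => r (k + 1))) :
    nestedCI (m + 2) r (fun u => g (u 0) (u 1) * G (fun k => u (k + 1))) =
      nestedCI (m + 1) (fun k => r (k + 1)) (fun w => h (w 0) * G w) := by
  let K : ℂ → ℂ := fun w => nestedCI m (fun k => r (k + 1 + 1)) (G ∘ consSeq w)
  have hK : ContinuousOn K (sphere 0 (r 1)) :=
    continuousOn_nestedCI_consSeq (fun k => hr (k + 1)) hG
  calc nestedCI (m + 2) r (fun u => g (u 0) (u 1) * G (fun k => u (k + 1)))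
      = cInt (r 0) fun v => cInt (r 1) fun w => g v w * K w :=
        congrArg (cInt (r 0)) <| funext fun v => congrArg (cInt (r 1)) <| funext fun w =>
          nestedCI_const_mul m (fun k => r (k + 1 + 1)) (g v w) (G ∘ consSeq w)
    _ = cInt (r 1) fun w => cInt (r 0) (fun v => g v w) * K w := by
        rw [cInt_comm (Φ := fun v w => g v w * K w) (hr 0) (hr 1)
          (hg.mul (hK.comp continuousOn_snd fun q hq => hq.2))]
        simp only [cInt_mul_const]
    _ = cInt (r 1) fun w => h w * K w := cInt_congr (hr 1) fun w hw => by rw [hgh w hw]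
    _ = nestedCI (m + 1) (fun k => r (k + 1)) (fun w => h (w 0) * G w) :=
        congrArg _ <| funext fun w => (nestedCI_const_mul _ _ _ _).symm

lemma continuousOn_sub_inv_sphere_prod {r s : ℝ} (hsr : s < r) :
    ContinuousOn (fun q : ℂ × ℂ => (q.1 - q.2)⁻¹) (sphere 0 r ×ˢ sphere 0 s) :=
  continuous_sub.continuousOn.inv₀ fun _ hq =>
    sub_ne_zero.2 <| sphere_disjoint_ball.ne_of_mem hq.1 (sphere_subset_ball hsr hq.2)

lemma nestedCI_sub_inv_mul {m : ℕ} {r : ℕ → ℝ} (hr : ∀ k, 0 ≤ r k) (h10 : r 1 < r 0)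
    {f : ℂ → ℂ} (hf : DiffContOnCl ℂ f (ball 0 (r 0))) {G : (ℕ → ℂ) → ℂ}
    (hG : ContinuousOn G (nestedTorus (m + 1) fun k => r (k + 1))) :
    nestedCI (m + 2) r (fun u => (u 0 - u 1)⁻¹ * f (u 0) * G (fun k => u (k + 1))) =
      nestedCI (m + 1) (fun k => r (k + 1)) (fun w => f (w 0) * G w) := by
  have hf_sphere : ContinuousOn f (sphere 0 (r 0)) := hf.continuousOn.mono <| by
    rw [closure_ball 0 ((hr 1).trans_lt h10).ne']
    exact sphere_subset_closedBall
  refine nestedCI_integrate_first (g := fun v w => (v - w)⁻¹ * f v) hr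
    ((continuousOn_sub_inv_sphere_prod h10).mul (hf_sphere.comp continuousOn_fst fun _ hq => hq.1))
    (fun w hw => cInt_sub_inv_mul hf (sphere_subset_ball h10 hw)) hG

lemma nestedCI_inv_mul_sub_inv {m : ℕ} {r : ℕ → ℝ} (hr : ∀ k, 0 ≤ r k) (h1 : 0 < r 1)
    (h10 : r 1 < r 0) {G : (ℕ → ℂ) → ℂ}
    (hG : ContinuousOn G (nestedTorus (m + 1) fun k => r (k + 1))) :
    nestedCI (m + 2) r (fun u => (u 0)⁻¹ * (u 0 - u 1)⁻¹ * G (fun k => u (k + 1))) = 0 := by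
  have hinv : ContinuousOn (fun q : ℂ × ℂ => q.1⁻¹) (sphere 0 (r 0) ×ˢ sphere 0 (r 1)) :=
    continuousOn_fst.inv₀ fun _ hq => ne_zero_of_mem_sphere (h1.trans h10).ne' ⟨_, hq.1⟩
  rw [nestedCI_integrate_first (g := fun v w => v⁻¹ * (v - w)⁻¹) (h := 0) hr
    (hinv.mul (continuousOn_sub_inv_sphere_prod h10))
    (fun w hw => cInt_inv_mul_sub_inv (sphere_subset_ball h10 hw)
      (ne_zero_of_mem_sphere h1.ne' ⟨w, hw⟩)) hG]
  simpa only [Pi.zero_apply, zero_mul] using nestedCI_zero _ _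

lemma norm_of_mem_nestedTorus {m : ℕ} {r : ℕ → ℝ} {w : ℕ → ℂ} (hw : w ∈ nestedTorus m r) {k : ℕ}
    (hk : k < m) : ‖w k‖ = r k :=
  mem_sphere_zero_iff_norm.1 (hw k hk)

lemma sub_ne_zero_of_mem_nestedTorus {m : ℕ} {r : ℕ → ℝ} (hr : ∀ k, r (k + 1) < r k)
    {w : ℕ → ℂ} (hw : w ∈ nestedTorus m r) {k : ℕ} (hk : k + 1 < m) : w k - w (k + 1) ≠ 0 :=
  sub_ne_zero.2 fun h => (hr k).ne <| by
    rw [← norm_of_mem_nestedTorus hw hk, ← norm_of_mem_nestedTorus hw (k.lt_succ_self.trans hk), h]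

lemma mem_closedBall_of_mem_nestedTorus {m : ℕ} {r : ℕ → ℝ} {R : ℝ} (hrR : ∀ k, r k ≤ R)
    {w : ℕ → ℂ} (hw : w ∈ nestedTorus m r) {k : ℕ} (hk : k < m) : w k ∈ closedBall 0 R :=
  closedBall_subset_closedBall (hrR k) (sphere_subset_closedBall (hw k hk))

noncomputable def chainDen (P : ℕ → ℂ → ℂ) (a m : ℕ) (v : ℕ → ℂ) : ℂ :=
  ∏ ℓ ∈ range m, (v ℓ - v (ℓ + 1)) * (v (ℓ + 1) * P (a + ℓ + 1) (v (ℓ + 1)))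

lemma chainDen_succ (P : ℕ → ℂ → ℂ) (a m : ℕ) (v : ℕ → ℂ) :
    chainDen P a (m + 1) v =
      (v 0 - v 1) * (v 1 * P (a + 1) (v 1)) * chainDen P (a + 1) m (fun k => v (k + 1)) := by
  rw [chainDen, prod_range_succ', mul_comm, chainDen]
  congr 1
  refine prod_congr rfl fun ℓ _ => ?_
  rw [Nat.add_right_comm a 1 ℓ]
  rfl

lemma continuousOn_inv_mul_chainDen {P : ℕ → ℂ → ℂ} {b m : ℕ} {R : ℝ} {r : ℕ → ℝ}
    (hPc : ∀ ℓ ≤ m, ContinuousOn (P (b + ℓ)) (closedBall 0 R))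
    (hPne : ∀ ℓ ≤ m, ∀ z ∈ closedBall 0 R, P (b + ℓ) z ≠ 0)
    (hr : ∀ k, 0 < r k) (hrR : ∀ k, r k ≤ R) (hr_succ : ∀ k, r (k + 1) < r k) :
    ContinuousOn (fun w => (w 0 * P b (w 0) * chainDen P b m w)⁻¹) (nestedTorus (m + 1) r) := by
  have factor (ℓ : ℕ) (hℓ : ℓ ≤ m) :
      ContinuousOn (fun w : ℕ → ℂ => w ℓ * P (b + ℓ) (w ℓ)) (nestedTorus (m + 1) r) ∧
        ∀ w ∈ nestedTorus (m + 1) r, w ℓ * P (b + ℓ) (w ℓ) ≠ 0 := by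
    have hball {w} (hw : w ∈ nestedTorus (m + 1) r) : w ℓ ∈ closedBall 0 R :=
      mem_closedBall_of_mem_nestedTorus hrR hw (by omega)
    refine ⟨(continuous_apply ℓ).continuousOn.mul
      ((hPc ℓ hℓ).comp (continuous_apply ℓ).continuousOn fun w hw => hball hw), fun w hw => ?_⟩
    exact mul_ne_zero (ne_zero_of_mem_sphere (hr ℓ).ne' ⟨_, hw ℓ (by omega)⟩)
      (hPne ℓ hℓ _ (hball hw))
  refine ContinuousOn.inv₀ ((factor 0 m.zero_le).1.mul (continuousOn_finsetProd _ fun ℓ hℓ => ?_))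
    fun w hw => mul_ne_zero ((factor 0 m.zero_le).2 w hw) (prod_ne_zero_iff.2 fun ℓ hℓ => ?_)
  · exact ((continuous_apply ℓ).sub (continuous_apply (ℓ + 1))).continuousOn.mul
      (factor (ℓ + 1) (mem_range.1 hℓ)).1
  · exact mul_ne_zero
      (sub_ne_zero_of_mem_nestedTorus hr_succ hw (Nat.succ_lt_succ (mem_range.1 hℓ)))
      ((factor (ℓ + 1) (mem_range.1 hℓ)).2 w hw)

section Chain

variable {n : ℕ} {p P : ℕ → ℂ → ℂ} {R₀ : ℝ}

lemma continuousOn_inv_mul_chainDen_succ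
    (hp : ∀ i < n, ∀ v ∈ closedBall (0 : ℂ) R₀, AnalyticAt ℂ (p i) v)
    (hpne : ∀ i < n, ∀ v ∈ closedBall (0 : ℂ) R₀, p i v ≠ 0)
    (hPs : ∀ ℓ, 0 < ℓ → ∀ v, P ℓ v = p ℓ v / p (ℓ - 1) v)
    {a m : ℕ} (han : a + m + 1 < n) {r : ℕ → ℝ} (hr : ∀ k, 0 < r k) (hrR : ∀ k, r k ≤ R₀)
    (hr_succ : ∀ k, r (k + 1) < r k) :
    ContinuousOn (fun w => (w 0 * P (a + 1) (w 0) * chainDen P (a + 1) m w)⁻¹)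
      (nestedTorus (m + 1) r) := by
  have hP {ℓ : ℕ} (hℓ : ℓ ≤ m) : P (a + 1 + ℓ) = fun z => p (a + 1 + ℓ) z / p (a + ℓ) z := by
    ext z
    rw [hPs _ (by omega), Nat.add_right_comm, Nat.add_sub_cancel]
  refine continuousOn_inv_mul_chainDen (fun ℓ hℓ => ?_) (fun ℓ hℓ z hz => ?_) hr hrR hr_succ
  · rw [hP hℓ]
    exact (AnalyticOnNhd.differentiableOn (hp _ (by omega))).continuousOn.div
      (AnalyticOnNhd.differentiableOn (hp _ (by omega))).continuousOn (hpne _ (by omega))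
  · rw [hP hℓ]
    exact div_ne_zero (hpne _ (by omega) z hz) (hpne _ (by omega) z hz)

lemma nestedCI_chain_zero
    (hp : ∀ i < n, ∀ v ∈ closedBall (0 : ℂ) R₀, AnalyticAt ℂ (p i) v)
    (hpne : ∀ i < n, ∀ v ∈ closedBall (0 : ℂ) R₀, p i v ≠ 0)
    (hPs : ∀ ℓ, 0 < ℓ → ∀ v, P ℓ v = p ℓ v / p (ℓ - 1) v)
    {a m : ℕ} (han : a + m + 1 < n) {r : ℕ → ℝ} (hr : ∀ k, 0 < r k) (hrR : ∀ k, r k ≤ R₀)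
    (hr_succ : ∀ k, r (k + 1) < r k) :
    nestedCI (m + 2) r (fun v => p a (v 0) / (v 0 * p a (v 0) * chainDen P a (m + 1) v)) = 0 := by
  rw [← nestedCI_inv_mul_sub_inv (fun k => (hr k).le) (hr 1) (hr_succ 0)
    (continuousOn_inv_mul_chainDen_succ hp hpne hPs han (fun k => hr (k + 1)) (fun k => hrR (k + 1))
      fun k => hr_succ (k + 1))]
  refine nestedCI_congr (fun k => (hr k).le) fun v hv => ?_
  have hpa : p a (v 0) ≠ 0 :=
    hpne a (by omega) _ (mem_closedBall_of_mem_nestedTorus hrR hv (by omega))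
  rw [chainDen_succ]
  field_simp

lemma nestedCI_chain_succ
    (hp : ∀ i < n, ∀ v ∈ closedBall (0 : ℂ) R₀, AnalyticAt ℂ (p i) v)
    (hpne : ∀ i < n, ∀ v ∈ closedBall (0 : ℂ) R₀, p i v ≠ 0)
    (hPs : ∀ ℓ, 0 < ℓ → ∀ v, P ℓ v = p ℓ v / p (ℓ - 1) v)
    {a i m : ℕ} (hin : a + i + 1 < n) (han : a + m + 1 < n) {r : ℕ → ℝ} (hr : ∀ k, 0 < r k)
    (hrR : ∀ k, r k ≤ R₀) (hr_succ : ∀ k, r (k + 1) < r k) :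
    nestedCI (m + 2) r (fun v =>
        v 0 ^ (i + 1) * p (a + i + 1) (v 0) / (v 0 * p a (v 0) * chainDen P a (m + 1) v)) =
      nestedCI (m + 1) (fun k => r (k + 1)) (fun w =>
        w 0 ^ i * p (a + 1 + i) (w 0) / (w 0 * p (a + 1) (w 0) * chainDen P (a + 1) m w)) := by
  have hr' : ∀ k, 0 ≤ r k := fun k => (hr k).le
  set f : ℂ → ℂ := fun z => z ^ i * p (a + i + 1) z / p a z
  have hf : DiffContOnCl ℂ f (ball 0 (r 0)) :=
    (((differentiableOn_pow i).mul (AnalyticOnNhd.differentiableOn (hp _ hin))).div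
      (AnalyticOnNhd.differentiableOn (hp _ (by omega))) (hpne a (by omega))).diffContOnCl_ball
      (closedBall_subset_closedBall (hrR 0))
  set tail : (ℕ → ℂ) → ℂ := fun w => (w 0 * P (a + 1) (w 0) * chainDen P (a + 1) m w)⁻¹
  calc _ = nestedCI (m + 2) r fun v => (v 0 - v 1)⁻¹ * f (v 0) * tail (fun k => v (k + 1)) := by
        refine nestedCI_congr hr' fun v hv => ?_
        have hv0 : v 0 ≠ 0 := ne_zero_of_mem_sphere (hr 0).ne' ⟨_, hv 0 (by omega)⟩
        rw [chainDen_succ]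
        simp only [f, tail]
        field_simp
        ring
    _ = nestedCI (m + 1) (fun k => r (k + 1)) fun w => f (w 0) * tail w :=
      nestedCI_sub_inv_mul hr' (hr_succ 0) hf (continuousOn_inv_mul_chainDen_succ hp hpne hPs han
        (fun k => hr (k + 1)) (fun k => hrR (k + 1)) fun k => hr_succ (k + 1))
    _ = _ := by
        refine nestedCI_congr (fun k => hr' (k + 1)) fun w hw => ?_
        have hpa : p a (w 0) ≠ 0 :=
          hpne a (by omega) _
            (mem_closedBall_of_mem_nestedTorus (fun k => hrR (k + 1)) hw (by omega))
        simp only [f, tail]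
        rw [hPs (a + 1) a.succ_pos, Nat.add_sub_cancel, Nat.add_right_comm a 1 i]
        field_simp

lemma nestedCI_chain_eq_zero
    (hp : ∀ i < n, ∀ v ∈ closedBall (0 : ℂ) R₀, AnalyticAt ℂ (p i) v)
    (hpne : ∀ i < n, ∀ v ∈ closedBall (0 : ℂ) R₀, p i v ≠ 0)
    (hPs : ∀ ℓ, 0 < ℓ → ∀ v, P ℓ v = p ℓ v / p (ℓ - 1) v)
    {i a m : ℕ} (him : i < m) (han : a + m < n) {r : ℕ → ℝ} (hr : ∀ k, 0 < r k)
    (hrR : ∀ k, r k ≤ R₀) (hr_succ : ∀ k, r (k + 1) < r k) :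
    nestedCI (m + 1) r (fun v => v 0 ^ i * p (a + i) (v 0) / (v 0 * p a (v 0) * chainDen P a m v))
      = 0 := by
  induction i generalizing a m r with
  | zero =>
    obtain ⟨m, rfl⟩ : ∃ m', m = m' + 1 := ⟨m - 1, by omega⟩
    simpa only [pow_zero, one_mul, add_zero] using
      nestedCI_chain_zero hp hpne hPs (by omega) hr hrR hr_succ
  | succ i ih =>
    obtain ⟨m, rfl⟩ : ∃ m', m = m' + 1 := ⟨m - 1, by omega⟩
    exact (nestedCI_chain_succ hp hpne hPs (by omega) (by omega) hr hrR hr_succ).trans <|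
      ih (by omega) (by omega) (fun k => hr (k + 1)) (fun k => hrR (k + 1))
        fun k => hr_succ (k + 1)

end Chain

lemma prod_sub_mul_prod_eq_mul_chainDen (P : ℕ → ℂ → ℂ) (j : ℕ) (v : ℕ → ℂ) :
    (∏ ℓ ∈ range j, (v ℓ - v (ℓ + 1))) * ∏ ℓ ∈ range (j + 1), v ℓ * P ℓ (v ℓ) =
      v 0 * P 0 (v 0) * chainDen P 0 j v := by
  rw [prod_range_succ', chainDen, prod_mul_distrib (f := fun ℓ => v ℓ - v (ℓ + 1))]
  simp only [zero_add]
  ring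

-- Indices are shifted down by one: `i < j < n` is the paper's `1 ≤ i < j ≤ n`.
theorem stmt9_general (n : ℕ) (p P : ℕ → ℂ → ℂ) (R₀ : ℝ)
    (hp : ∀ i < n, ∀ v ∈ Metric.closedBall (0 : ℂ) R₀, AnalyticAt ℂ (p i) v)
    (hpne : ∀ i < n, ∀ v ∈ Metric.closedBall (0 : ℂ) R₀, p i v ≠ 0)
    (hP0 : ∀ v, P 0 v = p 0 v)
    (hPs : ∀ ℓ, 0 < ℓ → ∀ v, P ℓ v = p ℓ v / p (ℓ - 1) v)
    (ρ : ℕ → ℝ) (hρpos : ∀ k, 0 < ρ k) (hρR : ∀ k, ρ k < R₀) (hρdec : ∀ k, ρ (k+1) < ρ k)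
    (i j : ℕ) (hij : i < j) (hjn : j < n) :
    nestedCI (j + 1) ρ (fun v =>
      v 0 ^ i * p i (v 0) / ((∏ ℓ ∈ Finset.range j, (v ℓ - v (ℓ+1))) *
        ∏ ℓ ∈ Finset.range (j + 1), (v ℓ * P ℓ (v ℓ)))) = 0 := by
  simp only [prod_sub_mul_prod_eq_mul_chainDen, hP0]
  simpa only [zero_add] using nestedCI_chain_eq_zero (a := 0) hp hpne hPs hij (by omega) hρpos
    (fun k => (hρR k).le) hρdec

/-- for `1 ≤ i < j ≤ n` (here `0`-based: `i < j < n`, with `j+1` integration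
variables), the nested integral
`∮⋯∮ v₁^{i-1} pᵢ(v₁)/([∏_{ℓ=1}^{j-1}(v_ℓ-v_{ℓ+1})]·[∏_{ℓ=1}^j v_ℓ P_ℓ(v_ℓ)]) (dv/2πi)ʲ`
over nested small circles `|v₁| > ⋯ > |v_j|` equals `0`. -/
theorem stmt9 (n : ℕ) (p P : ℕ → ℂ → ℂ) (R₀ : ℝ) (hR₀ : 0 < R₀)
    (hp : ∀ i < n, ∀ v ∈ Metric.closedBall (0 : ℂ) R₀, AnalyticAt ℂ (p i) v)
    (hp0 : ∀ i < n, p i 0 = 1)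
    (hpne : ∀ i < n, ∀ v ∈ Metric.closedBall (0 : ℂ) R₀, p i v ≠ 0)
    (hP0 : ∀ v, P 0 v = p 0 v)
    (hPs : ∀ ℓ, 0 < ℓ → ∀ v, P ℓ v = p ℓ v / p (ℓ - 1) v)
    (ρ : ℕ → ℝ) (hρpos : ∀ k, 0 < ρ k) (hρR : ∀ k, ρ k < R₀) (hρdec : ∀ k, ρ (k+1) < ρ k)
    (i j : ℕ) (hij : i < j) (hjn : j < n) :
    nestedCI (j + 1) ρ (fun v =>
      v 0 ^ i * p i (v 0) / ((∏ ℓ ∈ Finset.range j, (v ℓ - v (ℓ+1))) *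
        ∏ ℓ ∈ Finset.range (j + 1), (v ℓ * P ℓ (v ℓ)))) = 0 :=
  stmt9_general n p P R₀ hp hpne hP0 hPs ρ hρpos hρR hρdec i j hij hjn
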